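/- If A ⊆ ℝ^{n+1} is a semialgebraic set and p : ℝ^{n+1} → ℝⁿ is the linear projection forgetting the last coordinate, then the image p(A) is a semialgebraic subset of ℝⁿ (Tarski–Seidenberg theorem). -/

import Mathlib

/-- A basic semialgebraic subset of `ℝⁿ`: a set of the form
`{x : p(x) = 0, q₁(x) > 0, …, q_k(x) > 0}` for real polynomials `p, q₁, …, q_k`. -/
def IsBasicSemialgebraic {n : ℕ} (A : Set (Fin n → ℝ)) : Prop :=
  ∃ (p : MvPolynomial (Fin n) ℝ) (k : ℕ) (q : Fin k → MvPolynomial (Fin n) ℝ),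
    A = {x : Fin n → ℝ |
      MvPolynomial.eval x p = 0 ∧ ∀ i : Fin k, 0 < MvPolynomial.eval x (q i)}

/-- A subset of `ℝⁿ` is semialgebraic if it is a finite union of basic semialgebraic
sets. -/
def IsSemialgebraic {n : ℕ} (A : Set (Fin n → ℝ)) : Prop :=
  ∃ (m : ℕ) (B : Fin m → Set (Fin n → ℝ)),
    (∀ i, IsBasicSemialgebraic (B i)) ∧ A = ⋃ i, B i

/-!
The projection of `{P = 0, Q₁ > 0, …, Q_k > 0}` is the set of parameters `x` for which the
univariate polynomials `P(x, ·), Q₁(x, ·), …` realize a given sign condition at some `y`. So it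
suffices that, for any finite family `Fᵢ` of polynomials in `y` with coefficients polynomial in
`x` and any signs `σᵢ`, the set of `x` for which some `y` satisfies `sign Fᵢ(x, y) = σᵢ` is
semialgebraic.

Split the parameter space according to the signs of the leading coefficients. Where one
vanishes, drop that term and induct on the total number of terms. Where none vanishes and some
`σᵢ = 0`, the condition has to be realized at a root of `Fᵢ`. Where all `σᵢ` are strict, it is realized near `-∞`, near `+∞`, or at
a root of `(∏ Fᵢ)'`: by Rolle, between the two roots of `∏ Fᵢ` adjacent to a realizing point.

Whether a sign condition on the `Gᵢ` is realized at a root of `f` is read off the Tarski queries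
`TaQ(g, f) = ∑_{f(y) = 0} sign g(y)` for `g = ∏ Gᵢ^{αᵢ}`, `αᵢ ∈ {0, 1, 2}`, because the
indicator of a sign is a quadratic polynomial in it. The Tarski query is the Cauchy index of
`f' g / f`, and Cauchy indices obey a Euclidean algorithm — invariance under
(pseudo-)remainders, and `Ind(g/f) + Ind(f/g) = (sign of f g at +∞ − sign at −∞) / 2` — whose
steps are uniform on the pieces where leading coefficients have fixed signs.
-/

noncomputable section

open Polynomial Set

variable {n : ℕ}

theorem IsBasicSemialgebraic.inter {A B : Set (Fin n → ℝ)} (hA : IsBasicSemialgebraic A)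
    (hB : IsBasicSemialgebraic B) : IsBasicSemialgebraic (A ∩ B) := by
  obtain ⟨p, k, q, rfl⟩ := hA
  obtain ⟨p', k', q', rfl⟩ := hB
  refine ⟨p ^ 2 + p' ^ 2, k + k', Fin.append q q', ?_⟩
  ext x
  simp only [mem_inter_iff, mem_ofPred_eq, map_add, map_pow, Fin.forall_fin_add, Fin.append_left,
    Fin.append_right]
  constructor
  · rintro ⟨⟨hp, hq⟩, hp', hq'⟩
    exact ⟨by simp [hp, hp'], hq, hq'⟩
  · rintro ⟨h, hq, hq'⟩
    have hp : MvPolynomial.eval x p = 0 := by nlinarith [sq_nonneg (MvPolynomial.eval x p')]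
    have hp' : MvPolynomial.eval x p' = 0 := by nlinarith [sq_nonneg (MvPolynomial.eval x p)]
    exact ⟨⟨hp, hq⟩, hp', hq'⟩

namespace IsSemialgebraic

theorem of_isBasicSemialgebraic {A : Set (Fin n → ℝ)} (h : IsBasicSemialgebraic A) :
    IsSemialgebraic A :=
  ⟨1, fun _ => A, fun _ => h, (iUnion_const A).symm⟩

theorem iUnion_of_isBasicSemialgebraic {κ : Type*} [Finite κ] {B : κ → Set (Fin n → ℝ)}
    (hB : ∀ j, IsBasicSemialgebraic (B j)) : IsSemialgebraic (⋃ j, B j) := by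
  obtain ⟨N, ⟨e⟩⟩ := Finite.exists_equiv_fin κ
  exact ⟨N, B ∘ e.symm, fun _ => hB _, (e.symm.surjective.iUnion_comp B).symm⟩

theorem iUnion {ι : Type*} [Finite ι] {A : ι → Set (Fin n → ℝ)}
    (h : ∀ i, IsSemialgebraic (A i)) : IsSemialgebraic (⋃ i, A i) := by
  choose m B hB hA using h
  rw [show ⋃ i, A i = ⋃ j : (Σ i, Fin (m i)), B j.1 j.2 by simp [hA, iUnion_sigma]]
  exact iUnion_of_isBasicSemialgebraic fun j => hB j.1 j.2

theorem empty : IsSemialgebraic (∅ : Set (Fin n → ℝ)) :=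
  ⟨0, Fin.elim0, fun i => i.elim0, by simp⟩

theorem univ : IsSemialgebraic (Set.univ : Set (Fin n → ℝ)) :=
  of_isBasicSemialgebraic ⟨0, 0, Fin.elim0, by ext; simp⟩

theorem setOf_const (P : Prop) : IsSemialgebraic {_x : Fin n → ℝ | P} := by
  by_cases h : P
  · simpa [h] using univ
  · simpa [h] using empty

theorem union {A B : Set (Fin n → ℝ)} (hA : IsSemialgebraic A) (hB : IsSemialgebraic B) :
    IsSemialgebraic (A ∪ B) := by
  rw [union_eq_iUnion]
  exact iUnion fun b => by cases b <;> assumption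

theorem biUnion {ι : Type*} (s : Finset ι) {A : ι → Set (Fin n → ℝ)}
    (h : ∀ i ∈ s, IsSemialgebraic (A i)) : IsSemialgebraic (⋃ i ∈ s, A i) := by
  rw [show ⋃ i ∈ s, A i = ⋃ i : s, A i by ext; simp]
  exact iUnion fun i => h i.1 i.2

theorem inter {A B : Set (Fin n → ℝ)} (hA : IsSemialgebraic A) (hB : IsSemialgebraic B) :
    IsSemialgebraic (A ∩ B) := by
  obtain ⟨k, P, hP, rfl⟩ := hA
  obtain ⟨m, Q, hQ, rfl⟩ := hB
  rw [iUnion_inter_iUnion]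
  exact iUnion fun i => iUnion fun j => of_isBasicSemialgebraic ((hP i).inter (hQ j))

theorem iInter {ι : Type*} [Finite ι] {A : ι → Set (Fin n → ℝ)}
    (h : ∀ i, IsSemialgebraic (A i)) : IsSemialgebraic (⋂ i, A i) := by
  classical
  have := Fintype.ofFinite ι
  suffices ∀ s : Finset ι, IsSemialgebraic (⋂ i ∈ s, A i) by simpa using this Finset.univ
  intro s
  induction s using Finset.induction_on with
  | empty => simpa using univ
  | insert i s _ ih => simpa using (h i).inter ih

theorem inter_of_mem_iff {T S P : Set (Fin n → ℝ)} (hS : IsSemialgebraic S)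
    (hP : IsSemialgebraic P) (h : ∀ x ∈ P, x ∈ T ↔ x ∈ S) : IsSemialgebraic (T ∩ P) := by
  rw [show T ∩ P = S ∩ P by ext x; by_cases hx : x ∈ P <;> simp [hx, h]]
  exact hS.inter hP

theorem setOf_sign_eq (p : MvPolynomial (Fin n) ℝ) (s : SignType) :
    IsSemialgebraic {x | SignType.sign (MvPolynomial.eval x p) = s} := by
  refine of_isBasicSemialgebraic ?_
  cases s
  · exact ⟨p, 0, Fin.elim0, by ext; simp⟩
  · exact ⟨0, 1, fun _ => -p, by ext; simp [sign_eq_neg_one_iff]⟩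
  · exact ⟨0, 1, fun _ => p, by ext; simp [sign_eq_one_iff]⟩

theorem setOf_sign_mem (p : MvPolynomial (Fin n) ℝ) (P : SignType → Prop) :
    IsSemialgebraic {x | P (SignType.sign (MvPolynomial.eval x p))} := by
  rw [show {x | P (SignType.sign (MvPolynomial.eval x p))} =
      ⋃ s : SignType, {_x | P s} ∩ {x | SignType.sign (MvPolynomial.eval x p) = s} by
    ext x; simp]
  exact iUnion fun s => (setOf_const _).inter (setOf_sign_eq p s)

theorem setOf_forall_sign_eq {ι : Type*} [Finite ι] (p : ι → MvPolynomial (Fin n) ℝ)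
    (s : ι → SignType) :
    IsSemialgebraic {x | ∀ i, SignType.sign (MvPolynomial.eval x (p i)) = s i} := by
  simpa only [ofPred_forall] using iInter fun i => setOf_sign_eq (p i) (s i)

theorem of_forall_sign {T : Set (Fin n → ℝ)} (p : MvPolynomial (Fin n) ℝ)
    (h : ∀ s : SignType, IsSemialgebraic (T ∩ {x | SignType.sign (MvPolynomial.eval x p) = s})) :
    IsSemialgebraic T := by
  rw [show T = ⋃ s : SignType, T ∩ {x | SignType.sign (MvPolynomial.eval x p) = s} by
    ext x; simp]
  exact iUnion h

theorem of_forall_signs {T : Set (Fin n → ℝ)} {ι : Type*} [Finite ι]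
    (p : ι → MvPolynomial (Fin n) ℝ)
    (h : ∀ s : ι → SignType,
      IsSemialgebraic (T ∩ {x | ∀ i, SignType.sign (MvPolynomial.eval x (p i)) = s i})) :
    IsSemialgebraic T := by
  rw [show T = ⋃ s : ι → SignType,
      T ∩ {x | ∀ i, SignType.sign (MvPolynomial.eval x (p i)) = s i} by
    ext x
    simpa using fun _ => ⟨_, fun _ => rfl⟩]
  exact iUnion h

theorem setOf_of_bounded {α : Type*} [Fintype α] (φ : α → (Fin n → ℝ) → ℤ) (D : ℤ)
    (hφ : ∀ a x, |φ a x| ≤ D) (hlevel : ∀ a t, IsSemialgebraic {x | φ a x = t})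
    (P : (α → ℤ) → Prop) : IsSemialgebraic {x | P fun a => φ a x} := by
  classical
  rw [show {x | P fun a => φ a x} = ⋃ v ∈ Fintype.piFinset fun _ => Finset.Icc (-D) D,
      {x | P v} ∩ ⋂ a, {x | φ a x = v a} by
    ext x
    simp only [mem_ofPred_eq, mem_iUnion, mem_inter_iff, mem_iInter, exists_prop,
      Fintype.mem_piFinset, Finset.mem_Icc]
    constructor
    · exact fun hx => ⟨_, fun a => abs_le.1 (hφ a x), hx, fun _ => rfl⟩
    · rintro ⟨v, -, hv, hx⟩
      rwa [show v = fun a => φ a x from funext fun a => (hx a).symm] at hv]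
  exact biUnion _ fun v _ => (setOf_const _).inter (iInter fun a => hlevel a (v a))

end IsSemialgebraic

namespace Polynomial

def rootCofactor (p : ℝ[X]) (y : ℝ) : ℝ[X] :=
  p /ₘ (X - C y) ^ rootMultiplicity y p

theorem pow_rootMultiplicity_mul_rootCofactor (p : ℝ[X]) (y : ℝ) :
    (X - C y) ^ rootMultiplicity y p * p.rootCofactor y = p :=
  pow_mul_divByMonic_rootMultiplicity_eq p y

theorem eval_rootCofactor_ne_zero {p : ℝ[X]} (hp : p ≠ 0) (y : ℝ) :
    (p.rootCofactor y).eval y ≠ 0 :=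
  eval_divByMonic_pow_rootMultiplicity_ne_zero y hp

theorem rootMultiplicity_eq_and_rootCofactor_eq {p u : ℝ[X]} {y : ℝ} {a : ℕ}
    (hu : u.eval y ≠ 0) (hp : p = (X - C y) ^ a * u) :
    rootMultiplicity y p = a ∧ p.rootCofactor y = u := by
  have hu0 : u ≠ 0 := by rintro rfl; simp at hu
  have hp0 : p ≠ 0 := hp ▸ mul_ne_zero (pow_ne_zero _ (X_sub_C_ne_zero y)) hu0
  have ha : rootMultiplicity y p = a := by
    rw [hp, rootMultiplicity_mul (hp ▸ hp0), rootMultiplicity_X_sub_C_pow,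
      rootMultiplicity_eq_zero hu, add_zero]
  refine ⟨ha, mul_left_cancel₀ (pow_ne_zero a (X_sub_C_ne_zero y)) ?_⟩
  rw [← hp, ← ha, pow_rootMultiplicity_mul_rootCofactor]

/-- The contribution of `y` to the Cauchy index of `g / f`: `±1` at a pole of odd order, according
to whether `g / f` jumps from `-∞` to `+∞` or from `+∞` to `-∞`, and `0` otherwise. -/
def cauchyJump (f g : ℝ[X]) (y : ℝ) : ℤ :=
  if rootMultiplicity y g < rootMultiplicity y f ∧
      Odd (rootMultiplicity y f - rootMultiplicity y g) then
    SignType.sign ((f.rootCofactor y).eval y * (g.rootCofactor y).eval y)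
  else 0

/-- Half the jump of the sign of `p` at `y`. -/
def halfSignJump (p : ℝ[X]) (y : ℝ) : ℤ :=
  if Odd (rootMultiplicity y p) then SignType.sign ((p.rootCofactor y).eval y) else 0

def cauchyIndex (f g : ℝ[X]) : ℤ :=
  ∑ y ∈ f.roots.toFinset, cauchyJump f g y

def tarskiQuery (g f : ℝ[X]) : ℤ :=
  ∑ y ∈ f.roots.toFinset, (SignType.sign (g.eval y) : ℤ)

def signAtTop (p : ℝ[X]) : SignType :=
  SignType.sign p.leadingCoeff

def signAtBot (p : ℝ[X]) : SignType :=
  (-1) ^ p.natDegree * SignType.sign p.leadingCoeff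

section CauchyJump

variable {f g : ℝ[X]} {y : ℝ}

theorem cauchyJump_of_eq_mul {u v : ℝ[X]} {a b : ℕ} (hu : u.eval y ≠ 0) (hv : v.eval y ≠ 0)
    (hf : f = (X - C y) ^ a * u) (hg : g = (X - C y) ^ b * v) :
    cauchyJump f g y = if b < a ∧ Odd (a - b) then (SignType.sign (u.eval y * v.eval y) : ℤ)
      else 0 := by
  obtain ⟨ha, hu'⟩ := rootMultiplicity_eq_and_rootCofactor_eq hu hf
  obtain ⟨hb, hv'⟩ := rootMultiplicity_eq_and_rootCofactor_eq hv hg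
  rw [cauchyJump, ha, hb, hu', hv']

theorem halfSignJump_of_eq_mul {p u : ℝ[X]} {a : ℕ} (hu : u.eval y ≠ 0)
    (hp : p = (X - C y) ^ a * u) :
    halfSignJump p y = if Odd a then (SignType.sign (u.eval y) : ℤ) else 0 := by
  obtain ⟨ha, hu'⟩ := rootMultiplicity_eq_and_rootCofactor_eq hu hp
  rw [halfSignJump, ha, hu']

theorem cauchyJump_eq_zero_of_dvd (h : (X - C y) ^ rootMultiplicity y f ∣ g) :
    cauchyJump f g y = 0 := by
  rcases eq_or_ne g 0 with rfl | hg
  · simp [cauchyJump, rootCofactor]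
  rw [cauchyJump, if_neg]
  rintro ⟨hlt, -⟩
  exact hlt.not_ge ((le_rootMultiplicity_iff hg).2 h)

theorem cauchyJump_eq_zero_of_not_isRoot (hy : ¬ f.IsRoot y) : cauchyJump f g y = 0 :=
  cauchyJump_eq_zero_of_dvd (by simp [rootMultiplicity_eq_zero hy])

theorem cauchyJump_add_cauchyJump_swap (hf : f ≠ 0) (hg : g ≠ 0) :
    cauchyJump f g y + cauchyJump g f y = halfSignJump (f * g) y := by
  have hu := eval_rootCofactor_ne_zero hf y
  have hv := eval_rootCofactor_ne_zero hg y
  have hf' := (pow_rootMultiplicity_mul_rootCofactor f y).symm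
  have hg' := (pow_rootMultiplicity_mul_rootCofactor g y).symm
  have hfg : f * g = (X - C y) ^ (rootMultiplicity y f + rootMultiplicity y g) *
      (f.rootCofactor y * g.rootCofactor y) := by
    rw [pow_add]; nth_rw 1 [hf', hg']; ring
  rw [cauchyJump_of_eq_mul hu hv hf' hg', cauchyJump_of_eq_mul hv hu hg' hf',
    halfSignJump_of_eq_mul (by rw [eval_mul]; exact mul_ne_zero hu hv) hfg, eval_mul,
    mul_comm ((g.rootCofactor y).eval y)]
  simp only [Nat.odd_iff]
  split_ifs <;> omega

theorem cauchyJump_C_mul (c : ℝ) :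
    cauchyJump f (C c * g) y = SignType.sign c * cauchyJump f g y := by
  rcases eq_or_ne f 0 with rfl | hf
  · simp [cauchyJump]
  rcases eq_or_ne (C c * g) 0 with h | h
  · rcases mul_eq_zero.1 h with hc | rfl
    · simp [C_eq_zero.1 hc, cauchyJump_eq_zero_of_dvd]
    · simp [cauchyJump_eq_zero_of_dvd]
  have hc : c ≠ 0 := by rintro rfl; simp at h
  have hg : g ≠ 0 := by rintro rfl; simp at h
  have hu := eval_rootCofactor_ne_zero hf y
  have hv := eval_rootCofactor_ne_zero hg y
  have hf' := (pow_rootMultiplicity_mul_rootCofactor f y).symm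
  have hg' := (pow_rootMultiplicity_mul_rootCofactor g y).symm
  have hcg : C c * g = (X - C y) ^ rootMultiplicity y g * (C c * g.rootCofactor y) := by
    nth_rw 1 [hg']; ring
  rw [cauchyJump_of_eq_mul hu (by simpa using ⟨hc, hv⟩) hf' hcg, cauchyJump_of_eq_mul hu hv hf' hg']
  split_ifs
  · simp only [eval_mul, eval_C, sign_mul, SignType.coe_mul]; ring
  · simp

theorem cauchyJump_mul_add (hf : f ≠ 0) (q r : ℝ[X]) :
    cauchyJump f (q * f + r) y = cauchyJump f r y := by
  have hfa := pow_rootMultiplicity_dvd f y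
  by_cases hr : (X - C y) ^ rootMultiplicity y f ∣ r
  · rw [cauchyJump_eq_zero_of_dvd hr, cauchyJump_eq_zero_of_dvd (dvd_add (hfa.mul_left q) hr)]
  have hr0 : r ≠ 0 := by rintro rfl; exact hr (dvd_zero _)
  have hu := eval_rootCofactor_ne_zero hf y
  have hv := eval_rootCofactor_ne_zero hr0 y
  have hf' := (pow_rootMultiplicity_mul_rootCofactor f y).symm
  have hr' := (pow_rootMultiplicity_mul_rootCofactor r y).symm
  set a := rootMultiplicity y f
  set b := rootMultiplicity y r
  have hba : b < a := lt_of_not_ge fun h => hr ((le_rootMultiplicity_iff hr0).1 h)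
  rw [show a = b + (a - b) by omega] at hf'
  have hsum : q * f + r =
      (X - C y) ^ b * (r.rootCofactor y + (X - C y) ^ (a - b) * q * f.rootCofactor y) := by
    nth_rw 1 [hf', hr']
    ring
  have hval : (r.rootCofactor y + (X - C y) ^ (a - b) * q * f.rootCofactor y).eval y =
      (r.rootCofactor y).eval y := by
    simp [zero_pow (Nat.sub_ne_zero_of_lt hba)]
  rw [cauchyJump_of_eq_mul hu (hval ▸ hv) hf' hsum, cauchyJump_of_eq_mul hu hv hf' hr', hval]

theorem cauchyJump_derivative_mul (hf : f ≠ 0) (hy : f.IsRoot y) (g : ℝ[X]) :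
    cauchyJump f (derivative f * g) y = SignType.sign (g.eval y) := by
  obtain ⟨k, hk⟩ : ∃ k, rootMultiplicity y f = k + 1 :=
    Nat.exists_eq_add_one.2 ((rootMultiplicity_pos hf).2 hy)
  have hu := eval_rootCofactor_ne_zero hf y
  have hf' := (pow_rootMultiplicity_mul_rootCofactor f y).symm
  rw [hk] at hf'
  set u := f.rootCofactor y
  set w := C ((k : ℝ) + 1) * u + (X - C y) * derivative u
  have hderiv : derivative f = (X - C y) ^ k * w := by
    nth_rw 1 [hf']
    rw [derivative_mul, derivative_X_sub_C_pow, Nat.add_sub_cancel]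
    push_cast; ring
  by_cases hg : g.eval y = 0
  · rw [hg, sign_zero, SignType.coe_zero]
    refine cauchyJump_eq_zero_of_dvd ?_
    rw [hderiv, hk, pow_succ]
    exact mul_dvd_mul (dvd_mul_right _ _) (dvd_iff_isRoot.2 hg)
  have hw : (w * g).eval y = (k + 1) * u.eval y * g.eval y := by simp [w]
  have hk0 : (k : ℝ) + 1 ≠ 0 := by positivity
  rw [cauchyJump_of_eq_mul hu (by rw [hw]; exact mul_ne_zero (mul_ne_zero hk0 hu) hg) hf'
      (by rw [hderiv, mul_assoc]),
    if_pos ⟨k.lt_succ_self, by simp⟩, hw,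
    show u.eval y * ((k + 1) * u.eval y * g.eval y) = ((k + 1) * u.eval y ^ 2) * g.eval y by ring,
    sign_mul, sign_pos (by positivity), one_mul]

end CauchyJump

section SignAtInfinity

open Filter

variable {p : ℝ[X]}

theorem eventually_sign_eval_eq_signAtTop (p : ℝ[X]) :
    ∀ᶠ z in atTop, SignType.sign (p.eval z) = signAtTop p := by
  by_cases hdeg : 0 < p.degree
  · rcases lt_trichotomy p.leadingCoeff 0 with h | h | h
    · filter_upwards [(tendsto_atTop_of_leadingCoeff_nonneg (-p) (by simpa using hdeg)
        (by simp [h.le])).eventually_gt_atTop 0] with z hz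
      rw [signAtTop, sign_neg h, sign_neg (by simpa using hz)]
    · exact absurd (leadingCoeff_eq_zero.1 h) (ne_zero_of_degree_gt hdeg)
    · filter_upwards [(tendsto_atTop_of_leadingCoeff_nonneg p hdeg h.le).eventually_gt_atTop 0]
        with z hz
      rw [signAtTop, sign_pos h, sign_pos hz]
  · rw [eq_C_of_degree_le_zero (not_lt.1 hdeg)]
    exact Eventually.of_forall fun z => by simp [signAtTop]

theorem sign_eval_eq_of_forall_mem_uIcc {t z : ℝ} (h : ∀ c ∈ uIcc t z, p.eval c ≠ 0) :
    SignType.sign (p.eval t) = SignType.sign (p.eval z) := by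
  have ht := h t left_mem_uIcc
  have hz := h z right_mem_uIcc
  by_contra hne
  have h0 : (0 : ℝ) ∈ uIcc (p.eval t) (p.eval z) := by
    rcases ht.lt_or_gt with ht | ht <;> rcases hz.lt_or_gt with hz | hz
    · simp [sign_neg ht, sign_neg hz] at hne
    · exact mem_uIcc.2 (Or.inl ⟨ht.le, hz.le⟩)
    · exact mem_uIcc.2 (Or.inr ⟨hz.le, ht.le⟩)
    · simp [sign_pos ht, sign_pos hz] at hne
  obtain ⟨c, hc, hc0⟩ := intermediate_value_uIcc p.continuous.continuousOn h0
  exact h c hc hc0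

theorem sign_eval_of_roots_lt (hp : p ≠ 0) {t : ℝ} (h : ∀ y ∈ p.roots, y < t) :
    SignType.sign (p.eval t) = signAtTop p := by
  obtain ⟨z, hz, htz⟩ := ((eventually_sign_eval_eq_signAtTop p).and (eventually_ge_atTop t)).exists
  rw [← hz]
  refine sign_eval_eq_of_forall_mem_uIcc fun c hc hc0 => ?_
  have := h c ((mem_roots hp).2 hc0)
  linarith [(uIcc_of_le htz ▸ hc).1]

theorem sign_eval_of_lt_roots (hp : p ≠ 0) {t : ℝ} (h : ∀ y ∈ p.roots, t < y) :
    SignType.sign (p.eval t) = signAtBot p := by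
  have hroots : ∀ y ∈ (p.comp (-X)).roots, y < -t := by
    simp only [roots_comp_neg_X, Multiset.mem_map]
    rintro _ ⟨y, hy, rfl⟩
    linarith [h y hy]
  have := sign_eval_of_roots_lt (comp_neg_X_eq_zero_iff.not.2 hp) hroots
  simpa [signAtTop, signAtBot, sign_mul, sign_pow, eval_comp] using this

theorem exists_forall_sign_eval_eq_signAtBot {ι : Type*} [Fintype ι] {f : ι → ℝ[X]}
    (hf : ∀ i, f i ≠ 0) : ∃ t, ∀ i, SignType.sign ((f i).eval t) = signAtBot (f i) := by
  obtain ⟨t, ht⟩ := (Finset.univ.biUnion fun i => (f i).roots.toFinset).bddBelow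
  refine ⟨t - 1, fun i => sign_eval_of_lt_roots (hf i) fun y hy => ?_⟩
  have := ht (Finset.mem_coe.2 (Finset.mem_biUnion.2 ⟨i, Finset.mem_univ i, by simpa using hy⟩))
  linarith

theorem exists_forall_sign_eval_eq_signAtTop {ι : Type*} [Fintype ι] {f : ι → ℝ[X]}
    (hf : ∀ i, f i ≠ 0) : ∃ t, ∀ i, SignType.sign ((f i).eval t) = signAtTop (f i) := by
  obtain ⟨t, ht⟩ := (Finset.univ.biUnion fun i => (f i).roots.toFinset).bddAbove
  refine ⟨t + 1, fun i => sign_eval_of_roots_lt (hf i) fun y hy => ?_⟩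
  have := ht (Finset.mem_coe.2 (Finset.mem_biUnion.2 ⟨i, Finset.mem_univ i, by simpa using hy⟩))
  linarith

end SignAtInfinity

section HalfSignJump

variable {q : ℝ[X]} {y : ℝ} {m : ℕ}

theorem roots_toFinset_X_sub_C_pow_mul (hq : q ≠ 0) (hm : m ≠ 0) :
    ((X - C y) ^ m * q).roots.toFinset = insert y q.roots.toFinset := by
  classical
  rw [roots_mul (mul_ne_zero (pow_ne_zero _ (X_sub_C_ne_zero y)) hq), roots_pow, roots_X_sub_C,
    Multiset.toFinset_add, Multiset.toFinset_nsmul _ _ hm, Multiset.toFinset_singleton,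
    Finset.insert_eq]

theorem signAtTop_X_sub_C_pow_mul : signAtTop ((X - C y) ^ m * q) = signAtTop q := by
  rw [signAtTop, signAtTop, leadingCoeff_mul, ((monic_X_sub_C y).pow m).leadingCoeff, one_mul]

theorem signAtBot_X_sub_C_pow_mul (hq : q ≠ 0) :
    signAtBot ((X - C y) ^ m * q) = (-1) ^ m * signAtBot q := by
  rw [signAtBot, signAtBot, natDegree_mul (pow_ne_zero _ (X_sub_C_ne_zero y)) hq,
    natDegree_pow, natDegree_X_sub_C, leadingCoeff_mul,
    ((monic_X_sub_C y).pow m).leadingCoeff, one_mul, mul_one, pow_add, mul_assoc]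

theorem halfSignJump_X_sub_C_pow_mul (hq : q ≠ 0) {z : ℝ} (hz : z < y) :
    halfSignJump ((X - C y) ^ m * q) z = (-1) ^ m * halfSignJump q z := by
  have hv := eval_rootCofactor_ne_zero hq z
  have hfac : (X - C y) ^ m * q =
      (X - C z) ^ rootMultiplicity z q * ((X - C y) ^ m * q.rootCofactor z) := by
    nth_rw 1 [← pow_rootMultiplicity_mul_rootCofactor q z]
    ring
  have hval : ((X - C y) ^ m * q.rootCofactor z).eval z ≠ 0 := by
    simpa using mul_ne_zero (pow_ne_zero m (sub_ne_zero.2 hz.ne)) hv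
  rw [halfSignJump_of_eq_mul hval hfac,
    halfSignJump_of_eq_mul hv (pow_rootMultiplicity_mul_rootCofactor q z).symm]
  split_ifs
  · simp [sign_mul, sign_pow, sign_neg (sub_neg.2 hz)]
  · simp

theorem two_mul_sum_halfSignJump_X_sub_C_pow_mul (hq : q ≠ 0) (hm : m ≠ 0)
    (hqy : ∀ z ∈ q.roots, z < y)
    (hwalk : 2 * ∑ z ∈ q.roots.toFinset, halfSignJump q z = (signAtTop q : ℤ) - signAtBot q) :
    2 * ∑ z ∈ ((X - C y) ^ m * q).roots.toFinset, halfSignJump ((X - C y) ^ m * q) z =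
      (signAtTop ((X - C y) ^ m * q) : ℤ) - signAtBot ((X - C y) ^ m * q) := by
  have hy : halfSignJump ((X - C y) ^ m * q) y = if Odd m then (signAtTop q : ℤ) else 0 := by
    rw [halfSignJump_of_eq_mul (u := q) (fun h => (hqy y ((mem_roots hq).2 h)).false) rfl,
      sign_eval_of_roots_lt hq hqy]
  have hsum : ∑ z ∈ q.roots.toFinset, halfSignJump ((X - C y) ^ m * q) z =
      (-1) ^ m * ∑ z ∈ q.roots.toFinset, halfSignJump q z := by
    rw [Finset.mul_sum]
    exact Finset.sum_congr rfl fun z hz =>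
      halfSignJump_X_sub_C_pow_mul hq (hqy z (Multiset.mem_toFinset.1 hz))
  rw [roots_toFinset_X_sub_C_pow_mul hq hm,
    Finset.sum_insert fun h => (hqy y (Multiset.mem_toFinset.1 h)).false, hy, hsum,
    signAtTop_X_sub_C_pow_mul, signAtBot_X_sub_C_pow_mul hq]
  rcases Nat.even_or_odd m with hm2 | hm2
  · simp only [hm2.neg_one_pow, Nat.not_odd_iff_even.2 hm2, if_false]
    push_cast [SignType.coe_one]
    linarith
  · simp only [hm2.neg_one_pow, hm2, if_true]
    push_cast [SignType.coe_one]
    linarith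

theorem two_mul_sum_halfSignJump {p : ℝ[X]} (hp : p ≠ 0) :
    2 * ∑ y ∈ p.roots.toFinset, halfSignJump p y = (signAtTop p : ℤ) - signAtBot p := by
  induction hd : p.natDegree using Nat.strong_induction_on generalizing p with
  | _ d ih =>
  rcases p.roots.toFinset.eq_empty_or_nonempty with hemp | hne
  · have h0 : p.roots = 0 := Multiset.toFinset_eq_empty.1 hemp
    rw [hemp, Finset.sum_empty, mul_zero, ← sign_eval_of_roots_lt hp (t := 0) (by simp [h0]),
      ← sign_eval_of_lt_roots hp (t := 0) (by simp [h0]), sub_self]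
  set y := p.roots.toFinset.max' hne
  have hy : p.IsRoot y := (mem_roots hp).1 (Multiset.mem_toFinset.1 (Finset.max'_mem _ hne))
  have hm : rootMultiplicity y p ≠ 0 := ((rootMultiplicity_pos hp).2 hy).ne'
  have hpq := (pow_rootMultiplicity_mul_rootCofactor p y).symm
  set q := p.rootCofactor y
  have hq : q ≠ 0 := by rintro h; rw [h, mul_zero] at hpq; exact hp hpq
  have hqy : ∀ z ∈ q.roots, z < y := fun z hz => by
    refine lt_of_le_of_ne (Finset.le_max' _ z ?_) ?_
    · rw [hpq, roots_toFinset_X_sub_C_pow_mul hq hm]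
      exact Finset.mem_insert_of_mem (Multiset.mem_toFinset.2 hz)
    · rintro rfl
      exact eval_rootCofactor_ne_zero hp _ ((mem_roots hq).1 hz)
  have hdeg : q.natDegree < d := by
    rw [← hd, hpq, natDegree_mul (pow_ne_zero _ (X_sub_C_ne_zero y)) hq]
    simp [Nat.pos_of_ne_zero hm]
  rw [hpq]
  exact two_mul_sum_halfSignJump_X_sub_C_pow_mul hq hm hqy (ih _ hdeg hq rfl)

end HalfSignJump

section CauchyIndex

variable {f g : ℝ[X]}

theorem cauchyIndex_eq_sum_of_subset (hf : f ≠ 0) {S : Finset ℝ} (hS : f.roots.toFinset ⊆ S) :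
    cauchyIndex f g = ∑ y ∈ S, cauchyJump f g y :=
  Finset.sum_subset hS fun _ _ hy =>
    cauchyJump_eq_zero_of_not_isRoot fun hr => hy (Multiset.mem_toFinset.2 ((mem_roots hf).2 hr))

theorem cauchyIndex_add_cauchyIndex_swap (hf : f ≠ 0) (hg : g ≠ 0) :
    cauchyIndex f g + cauchyIndex g f =
      if Odd (f.natDegree + g.natDegree) then
        (SignType.sign (f.leadingCoeff * g.leadingCoeff) : ℤ)
      else 0 := by
  have hfg := mul_ne_zero hf hg
  have hsub : ∀ h : ℝ[X], h ∣ f * g → h.roots.toFinset ⊆ (f * g).roots.toFinset := fun h hd =>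
    Multiset.toFinset_subset.2 (Multiset.subset_of_le (roots.le_of_dvd hfg hd))
  have hwalk := two_mul_sum_halfSignJump hfg
  rw [← Finset.sum_congr rfl fun y _ => cauchyJump_add_cauchyJump_swap hf hg (y := y),
    Finset.sum_add_distrib, ← cauchyIndex_eq_sum_of_subset hf (hsub f (dvd_mul_right f g)),
    ← cauchyIndex_eq_sum_of_subset hg (hsub g (dvd_mul_left g f)), signAtTop, signAtBot,
    natDegree_mul hf hg, leadingCoeff_mul] at hwalk
  rcases Nat.even_or_odd (f.natDegree + g.natDegree) with h | h
  · rw [if_neg (Nat.not_odd_iff_even.2 h)]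
    simp only [h.neg_one_pow, one_mul] at hwalk
    linarith
  · rw [if_pos h]
    simp only [h.neg_one_pow, neg_mul, one_mul, SignType.coe_neg] at hwalk
    linarith

theorem cauchyIndex_mul_add (hf : f ≠ 0) (q r : ℝ[X]) :
    cauchyIndex f (q * f + r) = cauchyIndex f r :=
  Finset.sum_congr rfl fun _ _ => cauchyJump_mul_add hf q r

theorem cauchyIndex_C_mul (c : ℝ) :
    cauchyIndex f (C c * g) = SignType.sign c * cauchyIndex f g := by
  simp only [cauchyIndex, cauchyJump_C_mul, Finset.mul_sum]

theorem cauchyIndex_C_left (c : ℝ) (g : ℝ[X]) : cauchyIndex (C c) g = 0 := by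
  simp [cauchyIndex]

theorem cauchyIndex_C_right (hf : f ≠ 0) (c : ℝ) :
    cauchyIndex f (C c) =
      if Odd f.natDegree then (SignType.sign (f.leadingCoeff * c) : ℤ) else 0 := by
  rcases eq_or_ne c 0 with rfl | hc
  · simpa using cauchyIndex_C_mul (f := f) (g := 0) 0
  simpa [cauchyIndex_C_left] using cauchyIndex_add_cauchyIndex_swap hf (C_ne_zero.2 hc)

theorem tarskiQuery_eq_cauchyIndex (g f : ℝ[X]) :
    tarskiQuery g f = cauchyIndex f (derivative f * g) := by
  rcases eq_or_ne f 0 with rfl | hf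
  · simp [tarskiQuery, cauchyIndex]
  exact Finset.sum_congr rfl fun y hy =>
    (cauchyJump_derivative_mul hf ((mem_roots hf).1 (Multiset.mem_toFinset.1 hy)) g).symm

theorem abs_tarskiQuery_le (g f : ℝ[X]) : |tarskiQuery g f| ≤ f.natDegree := by
  have hsign : ∀ r : ℝ, |(SignType.sign r : ℤ)| ≤ 1 := fun r => by
    cases SignType.sign r <;> simp
  calc |tarskiQuery g f| ≤ ∑ y ∈ f.roots.toFinset, |(SignType.sign (g.eval y) : ℤ)| :=
        Finset.abs_sum_le_sum_abs _ _
    _ ≤ ∑ y ∈ f.roots.toFinset, 1 := Finset.sum_le_sum fun y _ => hsign _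
    _ ≤ f.natDegree := by
        simpa using (f.roots.toFinset_card_le).trans (card_roots' f)

end CauchyIndex

/-- The coefficients of the polynomial in `s` interpolating the indicator of `s = σ` on
`{-1, 0, 1}`: `1 - s²`, `(s² + s) / 2` and `(s² - s) / 2`. -/
def signIndicatorCoeff : SignType → Fin 3 → ℚ
  | .zero => ![1, 0, -1]
  | .pos => ![0, 1 / 2, 1 / 2]
  | .neg => ![0, -1 / 2, 1 / 2]

theorem ite_sign_eq_eq_sum (σ s : SignType) :
    (if s = σ then 1 else 0 : ℚ) = ∑ j : Fin 3, signIndicatorCoeff σ j * (s : ℚ) ^ (j : ℕ) := by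
  cases σ <;> cases s <;> simp [signIndicatorCoeff, Fin.sum_univ_three] <;> norm_num

theorem card_filter_roots_eq_sum_tarskiQuery {ι : Type*} [Fintype ι] [DecidableEq ι] (f : ℝ[X])
    (g : ι → ℝ[X]) (σ : ι → SignType) :
    ((f.roots.toFinset.filter fun y => ∀ i, SignType.sign ((g i).eval y) = σ i).card : ℚ) =
      ∑ α : ι → Fin 3, (∏ i, signIndicatorCoeff (σ i) (α i)) *
        tarskiQuery (∏ i, g i ^ (α i : ℕ)) f := by
  have key : ∀ y : ℝ, (if ∀ i, SignType.sign ((g i).eval y) = σ i then 1 else 0 : ℚ) =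
      ∑ α : ι → Fin 3, (∏ i, signIndicatorCoeff (σ i) (α i)) *
        (SignType.sign ((∏ i, g i ^ (α i : ℕ)).eval y) : ℚ) := fun y => by
    rw [← Fintype.prod_boole]
    simp_rw [ite_sign_eq_eq_sum]
    rw [Finset.prod_univ_sum, Fintype.piFinset_univ]
    refine Finset.sum_congr rfl fun α _ => ?_
    have hsign : SignType.sign (∏ i, (g i).eval y ^ (α i : ℕ)) =
        ∏ i, SignType.sign ((g i).eval y ^ (α i : ℕ)) :=
      map_prod (signHom : ℝ →*₀ SignType) _ _
    have hcast : ((∏ i, SignType.sign ((g i).eval y ^ (α i : ℕ)) : SignType) : ℚ) =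
        ∏ i, (SignType.sign ((g i).eval y ^ (α i : ℕ)) : ℚ) :=
      map_prod (SignType.castHom : SignType →*₀ ℚ) _ _
    rw [Finset.prod_mul_distrib, eval_prod]
    simp only [eval_pow]
    rw [hsign, hcast]
    simp [sign_pow]
  rw [Finset.card_filter]
  push_cast
  rw [Finset.sum_congr rfl fun y _ => key y, Finset.sum_comm]
  refine Finset.sum_congr rfl fun α _ => ?_
  rw [← Finset.mul_sum, tarskiQuery]
  push_cast
  rfl

theorem exists_mem_roots_derivative_forall_eval_ne_zero {W : ℝ[X]} {a y b : ℝ} (hW : W ≠ 0)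
    (ha : W.IsRoot a) (hb : W.IsRoot b) (hy : W.eval y ≠ 0) (hay : a < y) (hyb : y < b) :
    ∃ c ∈ (derivative W).roots, ∀ z ∈ uIcc c y, W.eval z ≠ 0 := by
  set S := W.roots.toFinset
  have hS : ∀ {z}, z ∈ S ↔ W.IsRoot z := by simp [S, mem_roots hW]
  set a' := (S.filter (· < y)).max' ⟨a, Finset.mem_filter.2 ⟨hS.2 ha, hay⟩⟩
  set b' := (S.filter (y < ·)).min' ⟨b, Finset.mem_filter.2 ⟨hS.2 hb, hyb⟩⟩
  have ha' := Finset.mem_filter.1 (Finset.max'_mem _ _ : a' ∈ S.filter (· < y))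
  have hb' := Finset.mem_filter.1 (Finset.min'_mem _ _ : b' ∈ S.filter (y < ·))
  obtain ⟨c, hc, hc0⟩ := exists_deriv_eq_zero (f := fun z => W.eval z) (ha'.2.trans hb'.2)
    W.continuous.continuousOn (by rw [(hS.1 ha'.1).eq_zero, (hS.1 hb'.1).eq_zero])
  have hW' : derivative W ≠ 0 := fun h => by
    rw [eq_C_of_natDegree_eq_zero (derivative_eq_zero.1 h)] at ha hW
    exact hW (by simpa using ha)
  refine ⟨c, (mem_roots hW').2 (by rwa [Polynomial.deriv] at hc0), fun z hz hz0 => ?_⟩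
  have hzS : z ∈ S := hS.2 hz0
  rw [uIcc, mem_Icc] at hz
  have hlo : a' < z := (lt_inf_iff.2 ⟨hc.1, ha'.2⟩).trans_le hz.1
  have hhi : z < b' := hz.2.trans_lt (sup_lt_iff.2 ⟨hc.2, hb'.2⟩)
  rcases lt_trichotomy z y with hzy | rfl | hzy
  · exact hlo.not_ge (Finset.le_max' _ z (Finset.mem_filter.2 ⟨hzS, hzy⟩))
  · exact hy hz0
  · exact hhi.not_ge (Finset.min'_le _ z (Finset.mem_filter.2 ⟨hzS, hzy⟩))

theorem exists_forall_sign_eval_eq_iff {ι : Type*} [Fintype ι] {f : ι → ℝ[X]} (hf : ∀ i, f i ≠ 0)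
    {σ : ι → SignType} (hσ : ∀ i, σ i ≠ 0) :
    (∃ y, ∀ i, SignType.sign ((f i).eval y) = σ i) ↔
      (∀ i, signAtBot (f i) = σ i) ∨ (∀ i, signAtTop (f i) = σ i) ∨
        ∃ y ∈ (derivative (∏ i, f i)).roots, ∀ i, SignType.sign ((f i).eval y) = σ i := by
  refine ⟨fun ⟨y, hy⟩ => ?_, ?_⟩
  · set W := ∏ i, f i
    have hW : W ≠ 0 := Finset.prod_ne_zero_iff.2 fun i _ => hf i
    have hroot : ∀ {i z}, (f i).IsRoot z → W.IsRoot z := fun {i} _ h => by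
      simp only [IsRoot, W, eval_prod]
      exact Finset.prod_eq_zero (Finset.mem_univ i) h
    have hWy : W.eval y ≠ 0 := by
      simp only [W, eval_prod]
      exact Finset.prod_ne_zero_iff.2 fun i _ h => hσ i (by rw [← hy i, h, sign_zero])
    by_cases hlo : ∃ a, W.IsRoot a ∧ a < y
    · by_cases hhi : ∃ b, W.IsRoot b ∧ y < b
      · obtain ⟨a, ha, hay⟩ := hlo
        obtain ⟨b, hb, hyb⟩ := hhi
        obtain ⟨c, hc, hcW⟩ :=
          exists_mem_roots_derivative_forall_eval_ne_zero hW ha hb hWy hay hyb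
        refine Or.inr (Or.inr ⟨c, hc, fun i => ?_⟩)
        rw [← hy i]
        exact sign_eval_eq_of_forall_mem_uIcc fun z hz h0 => hcW z hz (hroot h0)
      · refine Or.inr (Or.inl fun i => ?_)
        rw [← hy i, sign_eval_of_roots_lt (hf i) fun z hz => ?_]
        have hz := hroot ((mem_roots (hf i)).1 hz)
        exact lt_of_le_of_ne (not_lt.1 fun h => hhi ⟨z, hz, h⟩) (by rintro rfl; exact hWy hz)
    · refine Or.inl fun i => ?_
      rw [← hy i, sign_eval_of_lt_roots (hf i) fun z hz => ?_]
      have hz := hroot ((mem_roots (hf i)).1 hz)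
      exact lt_of_le_of_ne (not_lt.1 fun h => hlo ⟨z, hz, h⟩) (by rintro rfl; exact hWy hz)
  · rintro (h | h | ⟨y, -, hy⟩)
    · obtain ⟨t, ht⟩ := exists_forall_sign_eval_eq_signAtBot hf
      exact ⟨t, fun i => (ht i).trans (h i)⟩
    · obtain ⟨t, ht⟩ := exists_forall_sign_eval_eq_signAtTop hf
      exact ⟨t, fun i => (ht i).trans (h i)⟩
    · exact ⟨y, hy⟩

section PseudoDivision

variable {A : Type*} [CommRing A] [IsDomain A]

theorem exists_C_leadingCoeff_pow_mul_eq_mul_add {g : A[X]} (hg : 0 < g.natDegree) (f : A[X]) :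
    ∃ (k : ℕ) (q r : A[X]), C g.leadingCoeff ^ k * f = q * g + r ∧ r.natDegree < g.natDegree := by
  induction hd : f.natDegree using Nat.strong_induction_on generalizing f with
  | _ d ih =>
  rcases lt_or_ge d g.natDegree with hlt | hge
  · exact ⟨0, 0, f, by simp, hd ▸ hlt⟩
  have hg0 : g ≠ 0 := by rintro rfl; simp at hg
  have hf0 : f ≠ 0 := by rintro rfl; simp at hd; omega
  set e := g.natDegree
  set p := C g.leadingCoeff * f
  set p' := C f.leadingCoeff * X ^ (d - e) * g
  have hp : p.natDegree = d := by rw [natDegree_C_mul (leadingCoeff_ne_zero.2 hg0), hd]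
  have hp' : p'.natDegree = d := by
    rw [natDegree_mul (by simp [hf0]) hg0, natDegree_C_mul_X_pow _ _ (leadingCoeff_ne_zero.2 hf0)]
    omega
  have hp0 : p ≠ 0 := mul_ne_zero (by simp [hg0]) hf0
  have hsub : (p - p').natDegree < d := by
    have hlt := degree_sub_lt_left (p := p) (q := p')
      (by rw [degree_eq_natDegree hp0,
        degree_eq_natDegree (by rintro h; rw [h, natDegree_zero] at hp'; omega), hp, hp']) hp0
      (by simp only [p, p', leadingCoeff_mul, leadingCoeff_C, leadingCoeff_X_pow, mul_one]; ring)
    rcases eq_or_ne (p - p') 0 with h | h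
    · rw [h, natDegree_zero]; omega
    · exact hp ▸ natDegree_lt_natDegree h hlt
  obtain ⟨k, q, r, heq, hr⟩ := ih _ hsub (p - p') rfl
  refine ⟨k + 1, q + C g.leadingCoeff ^ k * C f.leadingCoeff * X ^ (d - e), r, ?_, hr⟩
  calc C g.leadingCoeff ^ (k + 1) * f =
        C g.leadingCoeff ^ k * (p - p') + C g.leadingCoeff ^ k * p' := by ring
    _ = _ := by rw [heq]; ring

theorem exists_C_leadingCoeff_pow_two_mul_mul_eq_mul_add {g : A[X]} (hg : 0 < g.natDegree)
    (f : A[X]) : ∃ (k : ℕ) (q r : A[X]),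
      C g.leadingCoeff ^ (2 * k) * f = q * g + r ∧ r.natDegree < g.natDegree := by
  obtain ⟨k, q, r, h, hr⟩ := exists_C_leadingCoeff_pow_mul_eq_mul_add hg f
  refine ⟨k, C g.leadingCoeff ^ k * q, C g.leadingCoeff ^ k * r, ?_, ?_⟩
  · rw [two_mul, pow_add, mul_assoc, h]
    ring
  · rw [← C_pow]
    exact natDegree_C_mul_le _ _ |>.trans_lt hr

end PseudoDivision

section Specialization

variable {A : Type*} [CommRing A] (φ : A →+* ℝ) {F G : A[X]}

theorem map_eraseLead_of_map_leadingCoeff_eq_zero (h : φ F.leadingCoeff = 0) :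
    F.eraseLead.map φ = F.map φ := by
  have hF := congrArg (map φ) (eraseLead_add_C_mul_X_pow F)
  simp only [Polynomial.map_add, Polynomial.map_mul, map_C, h, map_zero, zero_mul,
    add_zero] at hF
  exact hF

theorem map_ne_zero_of_map_leadingCoeff_ne_zero (h : φ F.leadingCoeff ≠ 0) : F.map φ ≠ 0 := by
  rw [← leadingCoeff_ne_zero, leadingCoeff_map_of_leadingCoeff_ne_zero φ h]
  exact h

theorem cauchyIndex_map_eq_of_eq_mul_add (hF : φ F.leadingCoeff ≠ 0) {k : ℕ} {q r : A[X]}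
    (h : C F.leadingCoeff ^ (2 * k) * G = q * F + r) :
    cauchyIndex (F.map φ) (G.map φ) = cauchyIndex (F.map φ) (r.map φ) := by
  have h' := congrArg (map φ) h
  simp only [Polynomial.map_mul, Polynomial.map_add, Polynomial.map_pow, map_C] at h'
  rw [← C_pow] at h'
  rw [← one_mul (cauchyIndex _ _), ← SignType.coe_one,
    ← sign_pos (pow_pos (pow_two_pos_of_ne_zero hF) k), ← pow_mul, ← cauchyIndex_C_mul, h',
    cauchyIndex_mul_add (map_ne_zero_of_map_leadingCoeff_ne_zero φ hF)]

theorem cauchyIndex_map_add_cauchyIndex_map_swap (hF : φ F.leadingCoeff ≠ 0)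
    (hG : φ G.leadingCoeff ≠ 0) :
    cauchyIndex (F.map φ) (G.map φ) + cauchyIndex (G.map φ) (F.map φ) =
      if Odd (F.natDegree + G.natDegree) then
        (SignType.sign (φ F.leadingCoeff) * SignType.sign (φ G.leadingCoeff) : ℤ)
      else 0 := by
  rw [cauchyIndex_add_cauchyIndex_swap (map_ne_zero_of_map_leadingCoeff_ne_zero φ hF)
    (map_ne_zero_of_map_leadingCoeff_ne_zero φ hG), natDegree_map_of_leadingCoeff_ne_zero φ hF,
    natDegree_map_of_leadingCoeff_ne_zero φ hG, leadingCoeff_map_of_leadingCoeff_ne_zero φ hF,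
    leadingCoeff_map_of_leadingCoeff_ne_zero φ hG, sign_mul, SignType.coe_mul]

end Specialization

end Polynomial

namespace IsSemialgebraic

theorem setOf_cauchyIndex_eq_inter_of_natDegree_lt
    {F G : (MvPolynomial (Fin n) ℝ)[X]} (hGF : G.natDegree < F.natDegree) {s : SignType}
    (hs : s ≠ 0)
    (ih : ∀ F' G' : (MvPolynomial (Fin n) ℝ)[X],
      F'.natDegree + G'.natDegree < F.natDegree + G.natDegree → ∀ t : ℤ,
        IsSemialgebraic
          {x | cauchyIndex (F'.map (MvPolynomial.eval x)) (G'.map (MvPolynomial.eval x)) = t})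
    (t : ℤ) :
    IsSemialgebraic
      ({x | cauchyIndex (F.map (MvPolynomial.eval x)) (G.map (MvPolynomial.eval x)) = t} ∩
        {x | SignType.sign (MvPolynomial.eval x F.leadingCoeff) = s}) := by
  have hF : ∀ x, SignType.sign (MvPolynomial.eval x F.leadingCoeff) = s →
      MvPolynomial.eval x F.leadingCoeff ≠ 0 := fun x hx h0 => hs (by rw [← hx, h0, sign_zero])
  rcases Nat.eq_zero_or_pos G.natDegree with hG0 | hG0
  · rw [eq_C_of_natDegree_eq_zero hG0]
    refine inter_of_mem_iff (setOf_sign_mem (G.coeff 0)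
      fun s' => (if Odd F.natDegree then (s * s' : ℤ) else 0) = t) (setOf_sign_eq _ _)
      fun x hx => ?_
    rw [mem_ofPred_eq, mem_ofPred_eq, Polynomial.map_C,
      cauchyIndex_C_right (map_ne_zero_of_map_leadingCoeff_ne_zero _ (hF x hx)),
      natDegree_map_of_leadingCoeff_ne_zero _ (hF x hx),
      leadingCoeff_map_of_leadingCoeff_ne_zero _ (hF x hx), sign_mul, hx, SignType.coe_mul]
  refine of_forall_sign G.leadingCoeff fun s' => ?_
  rw [inter_assoc]
  rcases eq_or_ne s' 0 with rfl | hs'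
  · refine inter_of_mem_iff (ih F G.eraseLead (by have := eraseLead_natDegree_le G; omega) t)
      ((setOf_sign_eq _ _).inter (setOf_sign_eq _ _)) fun x hx => ?_
    rw [mem_ofPred_eq, mem_ofPred_eq,
      map_eraseLead_of_map_leadingCoeff_eq_zero _ (sign_eq_zero_iff.1 hx.2)]
  have hG : ∀ x, SignType.sign (MvPolynomial.eval x G.leadingCoeff) = s' →
      MvPolynomial.eval x G.leadingCoeff ≠ 0 := fun x hx h0 => hs' (by rw [← hx, h0, sign_zero])
  obtain ⟨k, q, r, hdiv, hr⟩ := exists_C_leadingCoeff_pow_two_mul_mul_eq_mul_add hG0 F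
  set B : ℤ := if Odd (F.natDegree + G.natDegree) then (s * s' : ℤ) else 0
  refine inter_of_mem_iff (ih G r (by omega) (B - t))
    ((setOf_sign_eq _ _).inter (setOf_sign_eq _ _)) fun x ⟨hx, hx'⟩ => ?_
  have hswap := cauchyIndex_map_add_cauchyIndex_map_swap _ (hF x hx) (hG x hx')
  rw [hx, hx'] at hswap
  rw [mem_ofPred_eq, mem_ofPred_eq, ← cauchyIndex_map_eq_of_eq_mul_add _ (hG x hx') hdiv]
  omega

theorem setOf_cauchyIndex_eq (F G : (MvPolynomial (Fin n) ℝ)[X]) (t : ℤ) :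
    IsSemialgebraic
      {x | cauchyIndex (F.map (MvPolynomial.eval x)) (G.map (MvPolynomial.eval x)) = t} := by
  induction hN : F.natDegree + G.natDegree using Nat.strong_induction_on generalizing F G t with
  | _ N ih =>
  replace ih : ∀ F' G' : (MvPolynomial (Fin n) ℝ)[X],
      F'.natDegree + G'.natDegree < F.natDegree + G.natDegree → ∀ t : ℤ, IsSemialgebraic
        {x | cauchyIndex (F'.map (MvPolynomial.eval x)) (G'.map (MvPolynomial.eval x)) = t} :=
    fun F' G' h t => ih _ (hN ▸ h) F' G' t rfl
  rcases Nat.eq_zero_or_pos F.natDegree with hF0 | hF0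
  · rw [eq_C_of_natDegree_eq_zero hF0]
    simpa [cauchyIndex_C_left] using setOf_const (0 = t)
  refine of_forall_sign F.leadingCoeff fun s => ?_
  rcases eq_or_ne s 0 with rfl | hs
  · refine inter_of_mem_iff (ih F.eraseLead G (by have := eraseLead_natDegree_le F; omega) t)
      (setOf_sign_eq _ _) fun x hx => ?_
    rw [mem_ofPred_eq, mem_ofPred_eq,
      map_eraseLead_of_map_leadingCoeff_eq_zero _ (sign_eq_zero_iff.1 hx)]
  rcases le_or_gt F.natDegree G.natDegree with hFG | hGF
  · obtain ⟨k, q, r, hdiv, hr⟩ := exists_C_leadingCoeff_pow_two_mul_mul_eq_mul_add hF0 G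
    refine inter_of_mem_iff (ih F r (by omega) t) (setOf_sign_eq _ _) fun x hx => ?_
    rw [mem_ofPred_eq, mem_ofPred_eq, cauchyIndex_map_eq_of_eq_mul_add _ ?_ hdiv]
    exact fun h0 => hs (by rw [← hx, h0, sign_zero])
  · exact setOf_cauchyIndex_eq_inter_of_natDegree_lt hGF hs ih t

theorem setOf_tarskiQuery_eq (H F : (MvPolynomial (Fin n) ℝ)[X])
    (t : ℤ) :
    IsSemialgebraic
      {x | tarskiQuery (H.map (MvPolynomial.eval x)) (F.map (MvPolynomial.eval x)) = t} := by
  simpa [tarskiQuery_eq_cauchyIndex, derivative_map] using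
    setOf_cauchyIndex_eq F (derivative F * H) t

theorem setOf_exists_mem_roots {ι : Type*} [Fintype ι] [DecidableEq ι]
    (F : (MvPolynomial (Fin n) ℝ)[X]) (G : ι → (MvPolynomial (Fin n) ℝ)[X]) (σ : ι → SignType) :
    IsSemialgebraic {x | ∃ y ∈ (F.map (MvPolynomial.eval x)).roots,
      ∀ i, SignType.sign (((G i).map (MvPolynomial.eval x)).eval y) = σ i} := by
  have hcount : ∀ x : Fin n → ℝ, (∃ y ∈ (F.map (MvPolynomial.eval x)).roots,
      ∀ i, SignType.sign (((G i).map (MvPolynomial.eval x)).eval y) = σ i) ↔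
      (1 : ℚ) ≤ ∑ α : ι → Fin 3, (∏ i, signIndicatorCoeff (σ i) (α i)) *
        (tarskiQuery ((∏ i, G i ^ (α i : ℕ)).map (MvPolynomial.eval x))
          (F.map (MvPolynomial.eval x)) : ℚ) := fun x => by
    simp only [Polynomial.map_prod, Polynomial.map_pow]
    rw [← card_filter_roots_eq_sum_tarskiQuery, Nat.one_le_cast, Finset.one_le_card,
      Finset.filter_nonempty_iff]
    simp
  simp_rw [hcount]
  exact setOf_of_bounded
    (fun (α : ι → Fin 3) x => tarskiQuery ((∏ i, G i ^ (α i : ℕ)).map (MvPolynomial.eval x))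
      (F.map (MvPolynomial.eval x))) F.natDegree
    (fun α x => (abs_tarskiQuery_le _ _).trans (by exact_mod_cast natDegree_map_le))
    (fun α t => setOf_tarskiQuery_eq _ F t)
    fun v => (1 : ℚ) ≤ ∑ α, (∏ i, signIndicatorCoeff (σ i) (α i)) * (v α : ℚ)

theorem setOf_exists_forall_sign_eq_inter {ι : Type*} [Fintype ι]
    [DecidableEq ι] (F : ι → (MvPolynomial (Fin n) ℝ)[X]) (σ s : ι → SignType)
    (hs : ∀ i, s i ≠ 0) :
    IsSemialgebraic
      ({x | ∃ y, ∀ i, SignType.sign (((F i).map (MvPolynomial.eval x)).eval y) = σ i} ∩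
        {x | ∀ i, SignType.sign (MvPolynomial.eval x (F i).leadingCoeff) = s i}) := by
  have hlc : ∀ x, (∀ i, SignType.sign (MvPolynomial.eval x (F i).leadingCoeff) = s i) →
      ∀ i, MvPolynomial.eval x (F i).leadingCoeff ≠ 0 :=
    fun x hx i h0 => hs i (by rw [← hx i, h0, sign_zero])
  by_cases hσ : ∃ j, σ j = 0
  · obtain ⟨j, hj⟩ := hσ
    refine inter_of_mem_iff (setOf_exists_mem_roots (F j) F σ)
      (setOf_forall_sign_eq _ _) fun x hx => ?_
    simp only [mem_ofPred_eq, mem_roots (map_ne_zero_of_map_leadingCoeff_ne_zero _ (hlc x hx j))]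
    exact ⟨fun ⟨y, hy⟩ => ⟨y, sign_eq_zero_iff.1 (hj ▸ hy j), hy⟩, fun ⟨y, _, hy⟩ => ⟨y, hy⟩⟩
  push Not at hσ
  refine inter_of_mem_iff ((setOf_const (∀ i, (-1) ^ (F i).natDegree * s i = σ i)).union
    ((setOf_const (∀ i, s i = σ i)).union
      (setOf_exists_mem_roots (derivative (∏ i, F i)) F σ)))
    (setOf_forall_sign_eq _ _) fun x (hx : ∀ i, _ = s i) => ?_
  simp only [mem_ofPred_eq, mem_union, exists_forall_sign_eval_eq_iff
    (fun i => map_ne_zero_of_map_leadingCoeff_ne_zero _ (hlc x hx i)) hσ, signAtBot, signAtTop,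
    natDegree_map_of_leadingCoeff_ne_zero _ (hlc x hx _),
    leadingCoeff_map_of_leadingCoeff_ne_zero _ (hlc x hx _), hx, ← Polynomial.map_prod,
    derivative_map]

theorem setOf_exists_forall_sign_eq {ι : Type*} [Fintype ι]
    [DecidableEq ι] (F : ι → (MvPolynomial (Fin n) ℝ)[X]) (σ : ι → SignType) :
    IsSemialgebraic
      {x | ∃ y, ∀ i, SignType.sign (((F i).map (MvPolynomial.eval x)).eval y) = σ i} := by
  induction hN : ∑ i, (F i).support.card using Nat.strong_induction_on generalizing F with
  | _ N ih =>
  refine of_forall_signs (fun i => (F i).leadingCoeff) fun s => ?_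
  by_cases hred : ∃ j, s j = 0 ∧ F j ≠ 0
  · obtain ⟨j, hsj, hFj⟩ := hred
    set F' := Function.update F j (F j).eraseLead
    have hj : (F' j).support.card < (F j).support.card := by
      simpa [F'] using eraseLead_support_card_lt hFj
    have hlt : ∑ i, (F' i).support.card < N := hN ▸ Finset.sum_lt_sum
      (fun i _ => by rcases eq_or_ne i j with rfl | hij; exacts [hj.le, by simp [F', hij]])
      ⟨j, Finset.mem_univ j, hj⟩
    refine inter_of_mem_iff (ih _ hlt F' rfl) (setOf_forall_sign_eq _ _) fun x hx => ?_
    have hmap : ∀ i, (F' i).map (MvPolynomial.eval x) = (F i).map (MvPolynomial.eval x) := by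
      intro i
      rcases eq_or_ne i j with rfl | hij
      · simpa [F'] using map_eraseLead_of_map_leadingCoeff_eq_zero _
          (sign_eq_zero_iff.1 ((hx i).trans hsj))
      · simp [F', hij]
    simp only [mem_ofPred_eq, hmap]
  push Not at hred
  set J := {i // s i ≠ 0}
  refine inter_of_mem_iff ((setOf_const (∀ i, s i = 0 → σ i = 0)).inter
    (setOf_exists_forall_sign_eq_inter (fun i : J => F i) (fun i => σ i)
      (fun i => s i) fun i => i.2)) (setOf_forall_sign_eq _ _) fun x (hx : ∀ i, _ = s i) => ?_
  simp only [mem_ofPred_eq, mem_inter_iff]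
  constructor
  · rintro ⟨y, hy⟩
    exact ⟨fun i hi => by simpa [hred i hi] using (hy i).symm, ⟨y, fun i => hy i⟩, fun i => hx i⟩
  · rintro ⟨hσ, ⟨y, hy⟩, -⟩
    refine ⟨y, fun i => ?_⟩
    by_cases hi : s i = 0
    · simp [hred i hi, hσ i hi]
    · exact hy ⟨i, hi⟩

end IsSemialgebraic

/-- `P` as a polynomial in its last variable with coefficients in the others; `finSuccEquiv`
singles out the first variable, so the variables are rotated first. -/
def MvPolynomial.polynomialLastVar (P : MvPolynomial (Fin (n + 1)) ℝ) :
    (MvPolynomial (Fin n) ℝ)[X] :=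
  MvPolynomial.finSuccEquiv ℝ n (MvPolynomial.rename (finRotate (n + 1)) P)

theorem MvPolynomial.eval_map_polynomialLastVar (P : MvPolynomial (Fin (n + 1)) ℝ)
    (x : Fin n → ℝ) (y : ℝ) :
    (P.polynomialLastVar.map (MvPolynomial.eval x)).eval y =
      MvPolynomial.eval (Fin.snoc x y) P := by
  rw [polynomialLastVar, ← eval_eq_eval_mv_eval', eval_rename, Fin.snoc_eq_cons_rotate]
  rfl

theorem IsBasicSemialgebraic.isSemialgebraic_image_comp_castSucc
    {A : Set (Fin (n + 1) → ℝ)} (hA : IsBasicSemialgebraic A) :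
    IsSemialgebraic ((fun x : Fin (n + 1) → ℝ => x ∘ Fin.castSucc) '' A) := by
  obtain ⟨p, k, q, rfl⟩ := hA
  convert IsSemialgebraic.setOf_exists_forall_sign_eq
    (fun i : Option (Fin k) => i.elim p.polynomialLastVar fun j => (q j).polynomialLastVar)
    (fun i => i.elim 0 fun _ => 1) using 1
  ext x
  simp only [mem_image, mem_ofPred_eq, Option.forall, Option.elim,
    MvPolynomial.eval_map_polynomialLastVar, sign_eq_zero_iff, sign_eq_one_iff]
  constructor
  · rintro ⟨x', hx', rfl⟩
    have hsnoc : Fin.snoc (x' ∘ Fin.castSucc) (x' (Fin.last n)) = x' := Fin.snoc_init_self x'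
    exact ⟨x' (Fin.last n), by rwa [hsnoc]⟩
  · rintro ⟨y, hy⟩
    exact ⟨Fin.snoc x y, hy, by ext i; simp⟩

end

/-- Tarski–Seidenberg: the image of a semialgebraic subset of `ℝ^{n+1}` under the
linear projection `ℝ^{n+1} → ℝⁿ` forgetting the last coordinate is semialgebraic. -/
theorem tarski_seidenberg {n : ℕ} (A : Set (Fin (n + 1) → ℝ))
    (hA : IsSemialgebraic A) :
    IsSemialgebraic ((fun x : Fin (n + 1) → ℝ => x ∘ Fin.castSucc) '' A) := by
  obtain ⟨m, B, hB, rfl⟩ := hA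
  rw [Set.image_iUnion]
  exact IsSemialgebraic.iUnion fun i => (hB i).isSemialgebraic_image_comp_castSucc
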